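/- arXiv:2402.12284 — 3 statements merged into one kernel-verified Lean document; each statement's English description precedes it below -/
import Mathlib

section
/- Suppose π₁ is minimax regret over Θ, and for each i > 1, πᵢ minimizes max_{θ ∈ Θ \ Θ'ᵢ} Regret_θ(·) over the set of policies agreeing in regret with π_{i−1} on Θ'ᵢ (where Θ'ᵢ ⊆ Θ'_{i+1} are increasing subsets and π_{i−1} is in each constraint set). Then every πᵢ is minimax regret over Θ, i.e., max_{θ ∈ Θ} Regret_θ(πᵢ) = min_{π} max_{θ ∈ Θ} Regret_θ(π). -/
/-- every policy in the iterative refinement is minimax regret over Θ. -/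
theorem stmt2 {Pol Θ : Type*} [Fintype Pol] [Fintype Θ] [Nonempty Pol] [Nonempty Θ] [DecidableEq Θ]
    (Regret : Θ → Pol → ℝ) (π : ℕ → Pol) (Θ' : ℕ → Finset Θ)
    (W : ℝ) (hW : W = ⨅ σ, ⨆ θ, Regret θ σ)
    (hΘ1 : Θ' 1 = ∅)
    (hmono : ∀ i, Θ' i ⊆ Θ' (i + 1))
    (hπ1 : (⨆ θ, Regret θ (π 1)) = W)
    (hagree : ∀ i, 1 < i → ∀ θ ∈ Θ' i, Regret θ (π i) = Regret θ (π (i - 1)))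
    (hmin : ∀ i, 1 < i → ∀ σ : Pol,
      (∀ θ ∈ Θ' i, Regret θ σ = Regret θ (π (i - 1))) →
      (Finset.univ \ Θ' i).sup (fun θ => (Regret θ (π i) : WithBot ℝ)) ≤
        (Finset.univ \ Θ' i).sup (fun θ => (Regret θ σ : WithBot ℝ)))
    (hbound : ∀ i, 1 < i → ∀ θ ∈ Θ' i, Regret θ (π (i - 1)) ≤ W) :
    ∀ i, 1 ≤ i → (⨆ θ, Regret θ (π i)) = W := by
  have hWle : ∀ σ : Pol, W ≤ ⨆ θ, Regret θ σ := by
    intro σ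
    rw [hW]
    exact ciInf_le (Set.Finite.bddBelow (Set.finite_range _)) σ
  intro i hi
  induction i, hi using Nat.le_induction with
  | base => exact hπ1
  | succ i hi ih =>
    have h1 : 1 < i + 1 := by omega
    have hsub : i + 1 - 1 = i := by omega
    -- each Regret θ (π i) ≤ W
    have hptW : ∀ θ, Regret θ (π i) ≤ W := by
      intro θ
      calc Regret θ (π i) ≤ ⨆ θ, Regret θ (π i) :=
            le_ciSup (f := fun θ => Regret θ (π i)) (Set.Finite.bddAbove (Set.finite_range _)) θ
        _ = W := ih
    -- pointwise bound for π (i+1)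
    have hpt : ∀ θ, Regret θ (π (i + 1)) ≤ W := by
      intro θ
      by_cases hθ : θ ∈ Θ' (i + 1)
      · have := hagree (i + 1) h1 θ hθ
        rw [this, hsub]
        have := hbound (i + 1) h1 θ hθ
        rwa [hsub] at this
      · have hmem : θ ∈ Finset.univ \ Θ' (i + 1) := by
          simp [hθ]
        have hm := hmin (i + 1) h1 (π i) (by intro θ' _; rw [hsub])
        have hle1 : (Regret θ (π (i + 1)) : WithBot ℝ) ≤
            (Finset.univ \ Θ' (i + 1)).sup (fun θ => (Regret θ (π (i + 1)) : WithBot ℝ)) :=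
          Finset.le_sup (f := fun θ => (Regret θ (π (i + 1)) : WithBot ℝ)) hmem
        have hle2 : (Finset.univ \ Θ' (i + 1)).sup (fun θ => (Regret θ (π i) : WithBot ℝ)) ≤
            (W : WithBot ℝ) := by
          apply Finset.sup_le
          intro θ' _
          exact_mod_cast hptW θ'
        have : (Regret θ (π (i + 1)) : WithBot ℝ) ≤ (W : WithBot ℝ) :=
          le_trans hle1 (le_trans hm hle2)
        exact_mod_cast this
    refine le_antisymm ?_ (hWle _)
    exact ciSup_le hpt
end

section
/- In the T-maze/maze UPOMDP abstraction, any Nash equilibrium of the zero-sum regret game puts all adversary probability mass on the two T-maze levels (each with probability 1/2), and the equilibrium agent guesses each turn direction with probability 1/2: the game value is 1.0, which strictly exceeds the maximum achievable regret 0.9 on any normal maze level. -/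
lemma esum18 {M : Type*} [Fintype M] (p' : ℝ) (g' : M → ℝ) (Λ' : Fin 2 ⊕ M → ℝ) :
    ∑ l, Λ' l * Sum.elim (fun i : Fin 2 => if i = 0 then 2 * (1 - p') else 2 * p') g' l
      = Λ' (Sum.inl 0) * (2 * (1 - p')) + Λ' (Sum.inl 1) * (2 * p')
        + ∑ μ, Λ' (Sum.inr μ) * g' μ := by
  rw [Fintype.sum_sum_type, Fin.sum_univ_two]
  norm_num

/-- in the T-maze/maze abstraction, at any Nash equilibrium of
the zero-sum regret game the adversary plays each T-maze with probability 1/2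
and no mazes, the agent turns each way with probability 1/2, and the value is
1.0 > 0.9. Levels are `Sum.inl 0` (T_L), `Sum.inl 1` (T_R), and `Sum.inr μ`
(mazes, whose regret g μ ∈ [0, 0.9] is freely chooseable by the agent). -/
theorem stmt18 {M : Type*} [Fintype M]
    (p : ℝ) (g : M → ℝ) (Λ : Fin 2 ⊕ M → ℝ)
    (hp : p ∈ Set.Icc (0:ℝ) 1) (hg : ∀ μ, g μ ∈ Set.Icc (0:ℝ) 0.9)
    (hΛ : Λ ∈ stdSimplex ℝ (Fin 2 ⊕ M)) :
    let E : ℝ → (M → ℝ) → (Fin 2 ⊕ M → ℝ) → ℝ := fun p' g' Λ' =>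
      ∑ l, Λ' l * Sum.elim (fun i => if i = 0 then 2 * (1 - p') else 2 * p') g' l
    (∀ Λ' ∈ stdSimplex ℝ (Fin 2 ⊕ M), E p g Λ' ≤ E p g Λ) →
    (∀ p' ∈ Set.Icc (0:ℝ) 1, ∀ g' : M → ℝ, (∀ μ, g' μ ∈ Set.Icc (0:ℝ) 0.9) →
      E p g Λ ≤ E p' g' Λ) →
    (Λ (Sum.inl 0) = 1 / 2 ∧ Λ (Sum.inl 1) = 1 / 2 ∧
      (∀ μ, Λ (Sum.inr μ) = 0) ∧ p = 1 / 2 ∧ E p g Λ = 1 ∧ (0.9 : ℝ) < 1) := by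
  intro E hA hB
  obtain ⟨hΛ0, hΛ1⟩ := hΛ
  obtain ⟨hp0, hp1⟩ := hp
  have hsum : Λ (Sum.inl 0) + Λ (Sum.inl 1) + ∑ μ, Λ (Sum.inr μ) = 1 := by
    rw [← hΛ1, Fintype.sum_sum_type, Fin.sum_univ_two]
  have hasum : ∀ μ : M, 0 ≤ Λ (Sum.inr μ) := fun μ => hΛ0 _
  -- value of E p g Λ
  have hE : E p g Λ = Λ (Sum.inl 0) * (2 * (1 - p)) + Λ (Sum.inl 1) * (2 * p)
      + ∑ μ, Λ (Sum.inr μ) * g μ := esum18 p g Λ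
  -- adversary deviations to Dirac at T_L, T_R
  have hdirac : ∀ i : Fin 2,
      (Sum.elim (fun j : Fin 2 => if j = i then (1:ℝ) else 0) (fun _ : M => (0:ℝ)))
        ∈ stdSimplex ℝ (Fin 2 ⊕ M) := by
    intro i
    constructor
    · rintro (j | μ) <;> simp <;> split <;> norm_num
    · rw [Fintype.sum_sum_type]
      simp [Finset.sum_ite_eq']
  have hL : 2 * (1 - p) ≤ E p g Λ := by
    have h1 : (∑ l, (Sum.elim (fun j : Fin 2 => if j = 0 then (1:ℝ) else 0)
        (fun _ : M => (0:ℝ))) l *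
        Sum.elim (fun i : Fin 2 => if i = 0 then 2 * (1 - p) else 2 * p) g l)
        ≤ E p g Λ := hA _ (hdirac 0)
    rw [esum18] at h1
    simpa using h1
  have hR : 2 * p ≤ E p g Λ := by
    have h1 : (∑ l, (Sum.elim (fun j : Fin 2 => if j = 1 then (1:ℝ) else 0)
        (fun _ : M => (0:ℝ))) l *
        Sum.elim (fun i : Fin 2 => if i = 0 then 2 * (1 - p) else 2 * p) g l)
        ≤ E p g Λ := hA _ (hdirac 1)
    rw [esum18] at h1
    simpa using h1
  have hV1 : 1 ≤ E p g Λ := by linarith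
  -- agent deviations: p' = 0 or 1, g' = 0
  have hg0 : ∀ μ : M, (0:ℝ) ∈ Set.Icc (0:ℝ) 0.9 := by intro μ; constructor <;> norm_num
  have hUa : E p g Λ ≤ 2 * Λ (Sum.inl 0) := by
    have h1 : E p g Λ ≤ ∑ l, Λ l *
        Sum.elim (fun i : Fin 2 => if i = 0 then 2 * (1 - (0:ℝ)) else 2 * 0)
          (fun _ : M => (0:ℝ)) l :=
      hB 0 (by constructor <;> norm_num) (fun _ => 0) hg0
    rw [esum18] at h1
    simp at h1; linarith
  have hUb : E p g Λ ≤ 2 * Λ (Sum.inl 1) := by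
    have h1 : E p g Λ ≤ ∑ l, Λ l *
        Sum.elim (fun i : Fin 2 => if i = 0 then 2 * (1 - (1:ℝ)) else 2 * 1)
          (fun _ : M => (0:ℝ)) l :=
      hB 1 (by constructor <;> norm_num) (fun _ => 0) hg0
    rw [esum18] at h1
    simp at h1; linarith
  have hab1 : Λ (Sum.inl 0) + Λ (Sum.inl 1) ≤ 1 := by
    have : 0 ≤ ∑ μ, Λ (Sum.inr μ) := Finset.sum_nonneg fun μ _ => hasum μ
    linarith
  have haval : Λ (Sum.inl 0) = 1 / 2 := by linarith
  have hbval : Λ (Sum.inl 1) = 1 / 2 := by linarith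
  have hμsum : ∑ μ, Λ (Sum.inr μ) = 0 := by linarith
  have hμ : ∀ μ, Λ (Sum.inr μ) = 0 := fun μ =>
    (Finset.sum_eq_zero_iff_of_nonneg (fun μ _ => hasum μ)).mp hμsum μ (Finset.mem_univ μ)
  have hgsum : ∑ μ, Λ (Sum.inr μ) * g μ = 0 :=
    Finset.sum_eq_zero fun μ _ => by rw [hμ μ]; ring
  have hVal : E p g Λ = 1 := by rw [hE, haval, hbval, hgsum]; ring
  have hpval : p = 1 / 2 := by rw [hVal] at hL hR; linarith
  exact ⟨haval, hbval, hμ, hpval, hVal, by norm_num⟩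
end

section
/- A Bayesian level-perfect minimax regret policy is itself a minimax regret policy: if π_j arises from the iterated refined-game construction with ⋃_{k=1}^{j} Supp(Λ_k) = Θ, then max_{θ∈Θ} Regret_θ(π_j) = min_π max_{θ∈Θ} Regret_θ(π). -/
/-- a Bayesian level-perfect minimax regret policy is itself a
minimax regret policy: if the union of all adversary supports through step j
covers Θ, then π j attains the global minimax regret value W. -/
theorem stmt19 {Pol Θ : Type*} [Fintype Pol] [Fintype Θ] [Nonempty Pol] [Nonempty Θ] [DecidableEq Θ]
    (Regret : Θ → Pol → ℝ) (π : ℕ → Pol) (Λ : ℕ → Finset Θ)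
    (W : ℝ) (hW : W = ⨅ σ, ⨆ θ, Regret θ σ)
    (Θ' : ℕ → Finset Θ) (hΘ' : ∀ i, Θ' i = (Finset.Ico 1 i).biUnion Λ)
    (hπ1 : (⨆ θ, Regret θ (π 1)) = W)
    (hΛ1 : ∀ θ ∈ Λ 1, Regret θ (π 1) = W)
    (hagree : ∀ i, 1 < i → ∀ θ ∈ Θ' i, Regret θ (π i) = Regret θ (π (i - 1)))
    (hmin : ∀ i, 1 < i → ∀ σ : Pol,
      (∀ θ ∈ Θ' i, Regret θ σ = Regret θ (π (i - 1))) →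
      (Finset.univ \ Θ' i).sup (fun θ => (Regret θ (π i) : WithBot ℝ)) ≤
        (Finset.univ \ Θ' i).sup (fun θ => (Regret θ σ : WithBot ℝ)))
    (hsupp : ∀ i, 1 < i → Λ i ⊆ Finset.univ \ Θ' i)
    (hval : ∀ i, 1 < i → ∀ θ ∈ Λ i,
      (Regret θ (π i) : WithBot ℝ) =
        (Finset.univ \ Θ' i).sup (fun θ' => (Regret θ' (π i) : WithBot ℝ)))
    (j : ℕ) (hj : 1 ≤ j) (hcover : Θ' (j + 1) = Finset.univ) :
    (⨆ θ, Regret θ (π j)) = W := by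
  have hbdd : ∀ σ : Pol, BddAbove (Set.range fun θ => Regret θ σ) :=
    fun σ => (Set.finite_range _).bddAbove
  have hWle : ∀ σ : Pol, W ≤ ⨆ θ, Regret θ σ := by
    intro σ
    rw [hW]
    exact ciInf_le (Set.finite_range _).bddBelow σ
  have key : ∀ i, 1 ≤ i → (⨆ θ, Regret θ (π i)) = W := by
    intro i hi
    induction i, hi using Nat.le_induction with
    | base => exact hπ1
    | succ n hn ih =>
      have h1 : 1 < n + 1 := Nat.lt_succ_of_le hn
      have hle : ∀ θ, Regret θ (π (n + 1)) ≤ W := by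
        intro θ
        by_cases hθ : θ ∈ Θ' (n + 1)
        · have h := hagree (n + 1) h1 θ hθ
          rw [h]
          exact (le_ciSup (hbdd _) θ).trans ih.le
        · have hmem : θ ∈ Finset.univ \ Θ' (n + 1) :=
            Finset.mem_sdiff.mpr ⟨Finset.mem_univ _, hθ⟩
          have h2 : (Regret θ (π (n + 1)) : WithBot ℝ) ≤
              (Finset.univ \ Θ' (n + 1)).sup
                (fun θ' => (Regret θ' (π (n + 1)) : WithBot ℝ)) :=
            Finset.le_sup (f := fun θ' => (Regret θ' (π (n + 1)) : WithBot ℝ)) hmem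
          have h3 := hmin (n + 1) h1 (π n) (fun θ' _ => rfl)
          have h4 : (Finset.univ \ Θ' (n + 1)).sup
              (fun θ' => (Regret θ' (π n) : WithBot ℝ)) ≤ (W : WithBot ℝ) :=
            Finset.sup_le fun θ' _ => by
              exact_mod_cast (le_ciSup (hbdd _) θ').trans ih.le
          have h5 : (Regret θ (π (n + 1)) : WithBot ℝ) ≤ (W : WithBot ℝ) :=
            h2.trans (h3.trans h4)
          exact_mod_cast h5
      exact le_antisymm (ciSup_le hle) (hWle _)
  exact key j hj
end
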